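/- arXiv:2005.08095 — 9 statements merged into one kernel-verified Lean document; each statement's English description precedes it below -/
import Mathlib

section
/- If S is a general d-position set of a connected graph G with d ≥ 2, then the subgraph of G induced by S is a disjoint union of complete graphs. -/
/-- `S` is a general `d`-position set of `G`: no three distinct vertices of `S`
lie on a common geodesic of length at most `d`. -/
def IsGenDPos {V : Type*} (G : SimpleGraph V) (d : ℕ) (S : Set V) : Prop :=
  ∀ ⦃u v w : V⦄, u ∈ S → v ∈ S → w ∈ S → u ≠ v → u ≠ w → v ≠ w →
    G.dist u v + G.dist v w = G.dist u w → G.dist u w ≤ d → False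

/-- The general `d`-position number of `G`. -/
noncomputable def gpNum {V : Type*} (G : SimpleGraph V) (d : ℕ) : ℕ :=
  sSup {n | ∃ S : Set V, IsGenDPos G d S ∧ S.ncard = n}

namespace SimpleGraph

variable {V : Type*} {G : SimpleGraph V}

lemma dist_eq_two_of_adj_of_adj {u w v : V} (huw : G.Adj u w) (hwv : G.Adj w v) (huv : u ≠ v)
    (hnadj : ¬G.Adj u v) : G.dist u v = 2 := by
  have : G.edist u v = 2 := edist_eq_two_iff.mpr ⟨huv, hnadj, w, huw, hwv.symm⟩
  simp [dist, this]

lemma Reachable.eq_or_adj_of_adj_trans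
    (htrans : ∀ ⦃a b c : V⦄, G.Adj a b → G.Adj b c → a ≠ c → G.Adj a c) {u v : V}
    (h : G.Reachable u v) : u = v ∨ G.Adj u v := by
  obtain ⟨p⟩ := h
  induction p with
  | nil => exact .inl rfl
  | cons hab _ ih =>
    rcases ih with rfl | hbc
    · exact .inr hab
    · exact (eq_or_ne _ _).imp_right (htrans hab hbc)

end SimpleGraph

/-- Otherwise `u` and `v` are at distance `2 ≤ d` with `w` on a geodesic between them. -/
lemma IsGenDPos.adj_of_adj_of_adj {V : Type*} {G : SimpleGraph V} {d : ℕ} {S : Set V}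
    (hS : IsGenDPos G d S) (hd : 2 ≤ d) {u w v : V} (hu : u ∈ S) (hw : w ∈ S) (hv : v ∈ S)
    (huw : G.Adj u w) (hwv : G.Adj w v) (huv : u ≠ v) : G.Adj u v := by
  by_contra hnadj
  have hdist := SimpleGraph.dist_eq_two_of_adj_of_adj huw hwv huv hnadj
  refine hS hu hw hv huw.ne huv hwv.ne ?_ (hdist ▸ hd)
  rw [hdist, SimpleGraph.dist_eq_one_iff_adj.mpr huw, SimpleGraph.dist_eq_one_iff_adj.mpr hwv]

theorem stmt_0_general {V : Type*} (G : SimpleGraph V) (d : ℕ) (hd : 2 ≤ d)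
    (S : Set V) (hS : IsGenDPos G d S) :
    ∀ u v : S, (G.induce S).Reachable u v → u = v ∨ G.Adj u.val v.val := by
  intro u v huv
  refine huv.eq_or_adj_of_adj_trans fun a b c hab hbc hac => ?_
  exact hS.adj_of_adj_of_adj hd a.2 b.2 c.2 hab hbc (Subtype.coe_injective.ne hac)

/-- If S is a general d-position set of a connected graph G with d ≥ 2, then the
subgraph of G induced by S is a disjoint union of complete graphs (i.e. every two
vertices in the same component of the induced subgraph are equal or adjacent). -/
theorem stmt_0 {V : Type*} (G : SimpleGraph V) (hG : G.Connected) (d : ℕ) (hd : 2 ≤ d)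
    (S : Set V) (hS : IsGenDPos G d S) :
    ∀ u v : S, (G.induce S).Reachable u v → u = v ∨ G.Adj u.val v.val :=
  stmt_0_general G d hd S hS
end

section
/- Let G be a connected graph, d ≥ 2, and let H_1, …, H_r be isometric subgraphs of G such that d_G(H_i, H_j) ≥ d for all i ≠ j. If S_i is a general d-position set of H_i for each i, then the union S_1 ∪ ⋯ ∪ S_r is a general d-position set of G. Consequently gp_d(G) ≥ Σ_i gp_d(H_i). -/
open SimpleGraph Function

section

variable {V : Type*} {G : SimpleGraph V} {d : ℕ}

theorem SimpleGraph.dist_lt_of_dist_add_dist_eq {u v w : V} (hd : 0 < d) (hvw : v ≠ w)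
    (hgeo : G.dist u v + G.dist v w = G.dist u w) (hle : G.dist u w ≤ d) :
    G.dist u v < d := by
  by_contra! hfar
  have huv : G.dist u v ≠ 0 := by omega
  have huw : G.dist u w ≠ 0 := by omega
  have hreach : G.Reachable v w :=
    (Reachable.of_dist_ne_zero huv).symm.trans (Reachable.of_dist_ne_zero huw)
  have := hreach.pos_dist_of_ne hvw
  omega

theorem SimpleGraph.disjoint_of_le_dist {s t : Set V} (hd : 0 < d)
    (h : ∀ u ∈ s, ∀ v ∈ t, d ≤ G.dist u v) : Disjoint s t :=
  Set.disjoint_left.2 fun a has hat => by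
    have := h a has a hat
    rw [dist_self] at this
    omega

theorem IsGenDPos.of_induce {A S : Set V}
    (hiso : ∀ u v : A, (G.induce A).dist u v = G.dist u.val v.val) (hSA : S ⊆ A)
    (hS : IsGenDPos (G.induce A) d (Subtype.val ⁻¹' S)) : IsGenDPos G d S := by
  intro u v w hu hv hw huv huw hvw hgeo hle
  refine hS (u := ⟨u, hSA hu⟩) (v := ⟨v, hSA hv⟩) (w := ⟨w, hSA hw⟩) hu hv hw
    (by simpa using huv) (by simpa using huw) (by simpa using hvw) ?_ ?_
  · simpa only [hiso] using hgeo
  · simpa only [hiso] using hle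

theorem isGenDPos_iUnion {ι : Type*} {S : ι → Set V} (hd : 0 < d)
    (hfar : ∀ i j, i ≠ j → ∀ u ∈ S i, ∀ v ∈ S j, d ≤ G.dist u v)
    (hS : ∀ i, IsGenDPos G d (S i)) : IsGenDPos G d (⋃ i, S i) := by
  intro u v w hu hv hw huv huw hvw hgeo hle
  obtain ⟨i, hui⟩ := Set.mem_iUnion.1 hu
  obtain ⟨j, hvj⟩ := Set.mem_iUnion.1 hv
  obtain ⟨k, hwk⟩ := Set.mem_iUnion.1 hw
  have hij : i = j := by
    by_contra hij
    exact (hfar i j hij u hui v hvj).not_gt (dist_lt_of_dist_add_dist_eq hd hvw hgeo hle)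
  have hjk : j = k := by
    by_contra hjk
    have hgeo' : G.dist w v + G.dist v u = G.dist w u := by
      rw [G.dist_comm (u := w) (v := v), G.dist_comm (u := v) (v := u),
        G.dist_comm (u := w) (v := u), add_comm, hgeo]
    exact (hfar j k hjk v hvj w hwk).not_gt
      (G.dist_comm ▸ dist_lt_of_dist_add_dist_eq hd huv.symm hgeo' (G.dist_comm ▸ hle))
  subst hij hjk
  exact hS i hui hvj hwk huv huw hvw hgeo hle

variable [Finite V]

theorem bddAbove_ncard_isGenDPos (G : SimpleGraph V) (d : ℕ) :
    BddAbove {n | ∃ S : Set V, IsGenDPos G d S ∧ S.ncard = n} :=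
  ⟨Nat.card V, by
    rintro _ ⟨S, -, rfl⟩
    exact Set.ncard_le_card S⟩

theorem IsGenDPos.ncard_le_gpNum {S : Set V} (hS : IsGenDPos G d S) : S.ncard ≤ gpNum G d :=
  le_csSup (bddAbove_ncard_isGenDPos G d) ⟨S, hS, rfl⟩

theorem exists_isGenDPos_ncard_eq_gpNum (G : SimpleGraph V) (d : ℕ) :
    ∃ S : Set V, IsGenDPos G d S ∧ S.ncard = gpNum G d :=
  Nat.sSup_mem (s := {n | ∃ S : Set V, IsGenDPos G d S ∧ S.ncard = n})
    ⟨0, ∅, fun _ _ _ hu => hu.elim, Set.ncard_empty V⟩ (bddAbove_ncard_isGenDPos G d)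

end

theorem stmt_1_general {V : Type*} [Finite V] (G : SimpleGraph V)
    (d : ℕ) (hd : 2 ≤ d) (r : ℕ) (A : Fin r → Set V)
    (hiso : ∀ i, ∀ u v : (A i), (G.induce (A i)).dist u v = G.dist u.val v.val)
    (hfar : ∀ i j, i ≠ j → ∀ u ∈ A i, ∀ v ∈ A j, d ≤ G.dist u v)
    (S : Fin r → Set V) (hsub : ∀ i, S i ⊆ A i)
    (hgp : ∀ i, IsGenDPos (G.induce (A i)) d (Subtype.val ⁻¹' (S i))) :
    IsGenDPos G d (⋃ i, S i) ∧
      ∑ i, gpNum (G.induce (A i)) d ≤ gpNum G d := by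
  have hdpos : 0 < d := by omega
  have hunion : ∀ T : Fin r → Set V, (∀ i, T i ⊆ A i) →
      (∀ i, IsGenDPos (G.induce (A i)) d (Subtype.val ⁻¹' (T i))) → IsGenDPos G d (⋃ i, T i) :=
    fun T hTA hT => isGenDPos_iUnion hdpos
      (fun i j hij u hu v hv => hfar i j hij u (hTA i hu) v (hTA j hv))
      (fun i => (hT i).of_induce (hiso i) (hTA i))
  refine ⟨hunion S hsub hgp, ?_⟩
  choose T hT hTcard using fun i => exists_isGenDPos_ncard_eq_gpNum (G.induce (A i)) d
  have hTA : ∀ i, Subtype.val '' T i ⊆ A i := fun i => Subtype.coe_image_subset _ _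
  have hdisj : Pairwise (Disjoint on fun i => Subtype.val '' T i) := fun i j hij =>
    disjoint_of_le_dist hdpos fun u hu v hv => hfar i j hij u (hTA i hu) v (hTA j hv)
  calc ∑ i, gpNum (G.induce (A i)) d = ∑ i, (Subtype.val '' T i).ncard := by
        simp only [Set.ncard_image_of_injective _ Subtype.val_injective, hTcard]
    _ = (⋃ i, Subtype.val '' T i).ncard := by
        rw [Set.ncard_iUnion_of_finite (fun _ => Set.toFinite _) hdisj, finsum_eq_sum_of_fintype]
    _ ≤ gpNum G d := (hunion _ hTA fun i => by
        rw [Set.preimage_image_eq _ Subtype.val_injective]; exact hT i).ncard_le_gpNum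

/-- Isometric subgraphs pairwise at distance at least d: the union of general
d-position sets of the parts is a general d-position set of G, and
gp_d(G) ≥ Σ_i gp_d(H_i). -/
theorem stmt_1 {V : Type*} [Finite V] (G : SimpleGraph V) (hG : G.Connected)
    (d : ℕ) (hd : 2 ≤ d) (r : ℕ) (A : Fin r → Set V)
    (hiso : ∀ i, ∀ u v : (A i), (G.induce (A i)).dist u v = G.dist u.val v.val)
    (hfar : ∀ i j, i ≠ j → ∀ u ∈ A i, ∀ v ∈ A j, d ≤ G.dist u v)
    (S : Fin r → Set V) (hsub : ∀ i, S i ⊆ A i)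
    (hgp : ∀ i, IsGenDPos (G.induce (A i)) d (Subtype.val ⁻¹' (S i))) :
    IsGenDPos G d (⋃ i, S i) ∧
      ∑ i, gpNum (G.induce (A i)) d ≤ gpNum G d :=
  stmt_1_general G d hd r A hiso hfar S hsub hgp
end

section
/- For n ≥ 3 and 2 ≤ d ≤ n−1, the general d-position number of the path P_n equals 2⌈n/(d+1)⌉ − 1 if n ≡ 1 (mod d+1), and 2⌈n/(d+1)⌉ otherwise. -/
namespace SimpleGraph

variable {n : ℕ}

theorem pathGraph_natDist_le_length {u v : Fin n} (p : (pathGraph n).Walk u v) :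
    Nat.dist u v ≤ p.length := by
  induction p with
  | nil => simp
  | @cons a b c hab q ih =>
    have : Nat.dist a b = 1 := by
      rw [pathGraph_adj] at hab
      rcases hab with h | h <;> simp [Nat.dist, ← h]
    calc Nat.dist a c ≤ Nat.dist a b + Nat.dist b c := Nat.dist.triangle_inequality _ _ _
      _ ≤ (Walk.cons hab q).length := by rw [Walk.length_cons]; omega

theorem pathGraph_dist_le_of_val_add {u v : Fin n} {k : ℕ} (h : u.val + k = v.val) :
    (pathGraph n).dist u v ≤ k := by
  induction k generalizing v with
  | zero => simp [Fin.ext (h.symm.trans (Nat.add_zero _)).symm]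
  | succ k ih =>
    let w : Fin n := ⟨u + k, by omega⟩
    have hwv : (pathGraph n).Adj w v := pathGraph_adj.mpr (.inl (by simp only [w]; omega))
    calc (pathGraph n).dist u v ≤ (pathGraph n).dist u w + (pathGraph n).dist w v :=
          hwv.reachable.dist_triangle_right u
      _ ≤ k + 1 := by rw [dist_eq_one_iff_adj.mpr hwv]; exact Nat.add_le_add_right (ih rfl) 1

theorem pathGraph_dist (u v : Fin n) : (pathGraph n).dist u v = Nat.dist u v := by
  refine le_antisymm ?_ ?_
  · rcases le_total u v with h | h
    · rw [Nat.dist_eq_sub_of_le h]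
      exact pathGraph_dist_le_of_val_add (Nat.add_sub_of_le h)
    · rw [dist_comm, Nat.dist_comm, Nat.dist_eq_sub_of_le h]
      exact pathGraph_dist_le_of_val_add (Nat.add_sub_of_le h)
  · obtain ⟨p, hp⟩ := (pathGraph_preconnected n u v).exists_walk_length_eq_dist
    exact hp ▸ pathGraph_natDist_le_length p

end SimpleGraph

open SimpleGraph Finset

def NoThreeWithin (d : ℕ) (s : Set ℕ) : Prop :=
  ∀ ⦃x⦄, x ∈ s → ∀ ⦃y⦄, y ∈ s → ∀ ⦃z⦄, z ∈ s → x < y → y < z → d < z - x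

theorem NoThreeWithin.mono {d : ℕ} {s t : Set ℕ} (ht : NoThreeWithin d t) (hst : s ⊆ t) :
    NoThreeWithin d s :=
  fun _ hx _ hy _ hz ↦ ht (hst hx) (hst hy) (hst hz)

theorem isGenDPos_pathGraph_iff {n d : ℕ} {S : Set (Fin n)} :
    IsGenDPos (pathGraph n) d S ↔ NoThreeWithin d (Fin.val '' S) := by
  simp only [IsGenDPos, pathGraph_dist, Nat.dist, NoThreeWithin, Set.mem_image]
  constructor
  · rintro hS _ ⟨x, hx, rfl⟩ _ ⟨y, hy, rfl⟩ _ ⟨z, hz, rfl⟩ hxy hyz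
    by_contra! hzx
    exact hS hx hy hz (Fin.ne_of_lt hxy) (Fin.ne_of_lt (hxy.trans hyz)) (Fin.ne_of_lt hyz)
      (by omega) (by omega)
  · intro hS u v w hu hv hw huv huw hvw hsum hle
    rw [← Fin.val_ne_iff] at huv huw hvw
    rcases Nat.lt_or_gt_of_ne huw with h | h
    · have := hS ⟨u, hu, rfl⟩ ⟨v, hv, rfl⟩ ⟨w, hw, rfl⟩ (by omega) (by omega)
      omega
    · have := hS ⟨w, hw, rfl⟩ ⟨v, hv, rfl⟩ ⟨u, hu, rfl⟩ (by omega) (by omega)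
      omega

theorem noThreeWithin_mod_le_one (d : ℕ) : NoThreeWithin d {k | k % (d + 1) ≤ 1} := by
  intro x hx y hy z hz hxy hyz
  by_contra! hzx
  have hshift : ∀ k < d + 1, x % (d + 1) + k < d + 1 → (x + k) % (d + 1) = x % (d + 1) + k :=
    fun k hk h ↦ by rw [Nat.add_mod_of_add_mod_lt (by rwa [Nat.mod_eq_of_lt hk]),
      Nat.mod_eq_of_lt hk]
  simp only [Set.mem_ofPred_eq] at hx hy hz
  -- As `z - x ≤ d`, no residue wraps around: `z ≡ z - x ≥ 2` if `x ≡ 0`,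
  -- and `y ≡ 1 + (y - x) ≥ 2` if `x ≡ 1`.
  rcases Nat.le_one_iff_eq_zero_or_eq_one.mp hx with h0 | h1
  · have := hshift (z - x) (by omega) (by omega)
    rw [Nat.add_sub_of_le (by omega)] at this
    omega
  · have := hshift (y - x) (by omega) (by omega)
    rw [Nat.add_sub_of_le (by omega)] at this
    omega

namespace NoThreeWithin

variable {d : ℕ} {s : Finset ℕ}

theorem card_inter_Ico_le_two (hs : NoThreeWithin d s) (a : ℕ) :
    #(s ∩ Ico a (a + (d + 1))) ≤ 2 := by
  by_contra! h
  set t := s ∩ Ico a (a + (d + 1))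
  let f := t.orderEmbOfFin rfl
  have hmem (i : Fin #t) : f i ∈ s ∧ f i ∈ Ico a (a + (d + 1)) :=
    mem_inter.mp (t.orderEmbOfFin_mem rfl i)
  have h0 := hmem ⟨0, by omega⟩
  have h2 := hmem ⟨2, h⟩
  have := hs (mem_coe.mpr h0.1) (mem_coe.mpr (hmem ⟨1, by omega⟩).1) (mem_coe.mpr h2.1)
    (f.strictMono (Fin.mk_lt_mk.mpr zero_lt_one)) (f.strictMono (Fin.mk_lt_mk.mpr one_lt_two))
  simp only [mem_Ico] at h0 h2
  omega

theorem card_inter_range_le (hs : NoThreeWithin d s) (q : ℕ) {r : ℕ} (hr : r ≤ d + 1) :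
    #(s ∩ range ((d + 1) * q + r)) ≤ 2 * q + min r 2 := by
  induction q with
  | zero =>
    have hle_two : #(s ∩ range r) ≤ 2 := by
      simpa using (card_le_card (inter_subset_inter_left (by simpa using hr))).trans
        (hs.card_inter_Ico_le_two 0)
    simpa using le_min ((card_le_card inter_subset_right).trans (card_range r).le) hle_two
  | succ q ih =>
    set m := (d + 1) * q + r
    have hsplit : range ((d + 1) * (q + 1) + r) = range m ∪ Ico m (m + (d + 1)) := by
      rw [range_eq_Ico, range_eq_Ico, Ico_union_Ico_eq_Ico (Nat.zero_le _) (by omega)]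
      congr 1
      ring
    calc #(s ∩ range ((d + 1) * (q + 1) + r))
        ≤ #(s ∩ range m) + #(s ∩ Ico m (m + (d + 1))) := by
          rw [hsplit, inter_union_distrib_left]; exact card_union_le _ _
      _ ≤ 2 * (q + 1) + min r 2 := by linarith [hs.card_inter_Ico_le_two m]

end NoThreeWithin

theorem ncard_le_of_isGenDPos_pathGraph {n d : ℕ} {S : Set (Fin n)}
    (hS : IsGenDPos (pathGraph n) d S) :
    S.ncard ≤ 2 * (n / (d + 1)) + min (n % (d + 1)) 2 := by
  classical
  set s : Finset ℕ := S.toFinset.map Fin.valEmbedding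
  have hs : NoThreeWithin d s := by
    simpa [s] using isGenDPos_pathGraph_iff.mp hS
  have hsn : s ∩ range n = s := inter_eq_left.mpr fun x hx ↦ by
    obtain ⟨y, -, rfl⟩ := mem_map.mp hx
    exact mem_range.mpr y.isLt
  calc S.ncard = #(s ∩ range ((d + 1) * (n / (d + 1)) + n % (d + 1))) := by
        rw [Nat.div_add_mod, hsn, card_map, Set.ncard_eq_toFinset_card']
    _ ≤ _ := hs.card_inter_range_le _ (Nat.mod_lt n d.add_one_pos).le

section ModLeOne

variable {d : ℕ}

theorem count_mod_le_one_of_le {r : ℕ} (hr : r ≤ d + 1) :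
    Nat.count (fun k ↦ k % (d + 1) ≤ 1) r = min r 2 := by
  induction r with
  | zero => simp
  | succ r ih =>
    rw [Nat.count_succ, ih (by omega), Nat.mod_eq_of_lt (by omega)]
    split_ifs <;> omega

theorem count_mod_le_one (hd : 0 < d) (q : ℕ) {r : ℕ} (hr : r ≤ d + 1) :
    Nat.count (fun k ↦ k % (d + 1) ≤ 1) ((d + 1) * q + r) = 2 * q + min r 2 := by
  induction q generalizing r with
  | zero => simpa using count_mod_le_one_of_le hr
  | succ q ih =>
    rw [Nat.count_add]
    simp only [Nat.mul_add_mod]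
    rw [count_mod_le_one_of_le hr, mul_add_one, ih le_rfl]
    omega

theorem ncard_setOf_val_mod_le_one (n : ℕ) (hd : 0 < d) :
    {x : Fin n | x.val % (d + 1) ≤ 1}.ncard = 2 * (n / (d + 1)) + min (n % (d + 1)) 2 := by
  rw [← count_mod_le_one hd _ (Nat.mod_lt n d.add_one_pos).le, Nat.div_add_mod,
    Nat.count_eq_card_filter_range, ← Set.ncard_image_of_injective _ Fin.val_injective,
    ← Set.ncard_coe_finset]
  congr 1
  ext k
  simp only [Set.mem_image, Set.mem_ofPred_eq, coe_filter, mem_range]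
  exact ⟨by rintro ⟨x, hx, rfl⟩; exact ⟨x.isLt, hx⟩, fun ⟨hk, hx⟩ ↦ ⟨⟨k, hk⟩, hx, rfl⟩⟩

theorem isGenDPos_pathGraph_setOf_val_mod_le_one (n d : ℕ) :
    IsGenDPos (pathGraph n) d {x : Fin n | x.val % (d + 1) ≤ 1} :=
  isGenDPos_pathGraph_iff.mpr <| (noThreeWithin_mod_le_one d).mono <| by
    rintro _ ⟨x, hx, rfl⟩; exact hx

end ModLeOne

theorem two_mul_div_add_min_mod_two_eq (n d : ℕ) :
    2 * (n / (d + 1)) + min (n % (d + 1)) 2 =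
      if n % (d + 1) = 1 then 2 * ((n + d) / (d + 1)) - 1 else 2 * ((n + d) / (d + 1)) := by
  have hceil : (n + d) / (d + 1) = n / (d + 1) + (n % (d + 1) + d) / (d + 1) := by
    have hsplit : n + d = n % (d + 1) + d + (d + 1) * (n / (d + 1)) := by
      have := Nat.mod_add_div n (d + 1)
      omega
    rw [hsplit, Nat.add_mul_div_left _ _ d.add_one_pos, add_comm]
  have hrem : (n % (d + 1) + d) / (d + 1) = if n % (d + 1) = 0 then 0 else 1 := by
    have := Nat.mod_lt n d.add_one_pos
    split_ifs with h
    · rw [h, zero_add, Nat.div_eq_of_lt d.lt_add_one]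
    · rw [Nat.div_eq_iff d.add_one_pos]
      omega
  rw [hceil, hrem]
  split_ifs <;> omega

theorem stmt_4_general (n d : ℕ) (hd : 2 ≤ d) :
    gpNum (SimpleGraph.pathGraph n) d =
      if n % (d + 1) = 1 then 2 * ((n + d) / (d + 1)) - 1
      else 2 * ((n + d) / (d + 1)) := by
  rw [← two_mul_div_add_min_mod_two_eq]
  refine IsGreatest.csSup_eq ⟨⟨_, isGenDPos_pathGraph_setOf_val_mod_le_one n d,
    ncard_setOf_val_mod_le_one n (by omega)⟩, ?_⟩
  rintro _ ⟨S, hS, rfl⟩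
  exact ncard_le_of_isGenDPos_pathGraph hS

/-- The general d-position number of the path P_n. -/
theorem stmt_4 (n d : ℕ) (hn : 3 ≤ n) (hd : 2 ≤ d) (hdn : d ≤ n - 1) :
    gpNum (SimpleGraph.pathGraph n) d =
      if n % (d + 1) = 1 then 2 * ((n + d) / (d + 1)) - 1
      else 2 * ((n + d) / (d + 1)) :=
  stmt_4_general n d hd
end

section
/- If G is a connected graph of diameter D and 2 ≤ k ≤ D, then gp_k(G) ≥ 2⌈(D+1)/(k+1)⌉ − 1 when D ≡ 0 (mod k+1), and gp_k(G) ≥ 2⌈(D+1)/(k+1)⌉ otherwise. -/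
def blockPos (K j : ℕ) : ℕ := K * (j / 2) + j % 2

lemma blockPos_two_mul (K a : ℕ) : blockPos K (2 * a) = K * a := by
  simp [blockPos]

lemma blockPos_two_mul_add_one (K a : ℕ) : blockPos K (2 * a + 1) = K * a + 1 := by
  simp [blockPos, Nat.mul_add_div]

lemma blockPos_add_two (K j : ℕ) : blockPos K (j + 2) = blockPos K j + K := by
  simp only [blockPos, Nat.add_div_right j two_pos, Nat.add_mod_right, Nat.mul_succ]
  omega

lemma blockPos_strictMono {K : ℕ} (hK : 2 ≤ K) : StrictMono (blockPos K) := by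
  refine strictMono_nat_of_lt_succ fun j => ?_
  obtain ⟨a, rfl | rfl⟩ := Nat.even_or_odd' j
  · rw [blockPos_two_mul, blockPos_two_mul_add_one]
    omega
  · rw [show 2 * a + 1 + 1 = 2 * (a + 1) by ring, blockPos_two_mul, blockPos_two_mul_add_one,
      Nat.mul_succ]
    omega

lemma blockPos_le_of_lt {K D j : ℕ} (hK : 0 < K)
    (hj : j < if D % K = 0 then 2 * (D / K) + 1 else 2 * (D / K) + 2) : blockPos K j ≤ D := by
  have hD := Nat.div_add_mod D K
  obtain ⟨a, rfl | rfl⟩ := Nat.even_or_odd' j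
  · have ha : a ≤ D / K := by split_ifs at hj <;> omega
    have := Nat.mul_le_mul_left K ha
    rw [blockPos_two_mul]
    omega
  · rw [blockPos_two_mul_add_one]
    by_cases hr : D % K = 0
    · have ha : a + 1 ≤ D / K := by simp only [hr, if_true] at hj; omega
      have := Nat.mul_le_mul_left K ha
      rw [Nat.mul_succ] at this
      omega
    · have ha : a ≤ D / K := by simp only [hr, if_false] at hj; omega
      have := Nat.mul_le_mul_left K ha
      omega

namespace SimpleGraph

variable {V : Type*} {G : SimpleGraph V}

lemma Walk.dist_getVert_of_length_eq_dist {u v : V} {p : G.Walk u v}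
    (hp : p.length = G.dist u v) {i j : ℕ} (hij : i ≤ j) (hj : j ≤ p.length) :
    G.dist (p.getVert i) (p.getVert j) = j - i := by
  have hsub : ((p.drop i).take (j - i)).IsSubwalk p :=
    (Walk.isSubwalk_take _ _).trans (Walk.isSubwalk_drop _ _)
  have hlen := length_eq_dist_of_subwalk hp hsub
  rw [Walk.take_length, Walk.drop_length, Walk.drop_getVert, Nat.add_sub_cancel' hij] at hlen
  omega

lemma isGenDPos_of_forall_far {d : ℕ} {S : Set V}
    (h : ∀ ⦃u v w⦄, u ∈ S → v ∈ S → w ∈ S → u ≠ v → u ≠ w → v ≠ w →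
      d < G.dist u v ∨ d < G.dist v w ∨ d < G.dist u w) :
    IsGenDPos G d S := by
  intro u v w hu hv hw huv huw hvw hsum hle
  have := h hu hv hw huv huw hvw
  omega

lemma ncard_le_gpNum [Finite V] {d : ℕ} {S : Set V} (hS : IsGenDPos G d S) :
    S.ncard ≤ gpNum G d := by
  refine le_csSup ⟨Nat.card V, ?_⟩ ⟨S, hS, rfl⟩
  rintro _ ⟨T, -, rfl⟩
  exact Set.ncard_le_card T

lemma Walk.exists_isGenDPos_ncard_eq_of_blockPos_le {u v : V} {p : G.Walk u v}
    (hp : p.length = G.dist u v) {d K m : ℕ} (hK : 2 ≤ K) (hdK : d < K)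
    (hm : ∀ j < m, blockPos K j ≤ p.length) :
    ∃ S, IsGenDPos G d S ∧ S.ncard = m := by
  set f := fun j => p.getVert (blockPos K j)
  have hdist : ∀ ⦃a b⦄, a < b → b < m → G.dist (f a) (f b) = blockPos K b - blockPos K a :=
    fun a b hab hb => p.dist_getVert_of_length_eq_dist hp
      (blockPos_strictMono hK hab).le (hm b hb)
  have hfar : ∀ ⦃a b⦄, a < m → b < m → a + 2 ≤ b ∨ b + 2 ≤ a → d < G.dist (f a) (f b) := by
    suffices ∀ ⦃a b⦄, a + 2 ≤ b → b < m → d < G.dist (f a) (f b) by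
      rintro a b ha hb (h | h)
      exacts [this h hb, G.dist_comm ▸ this h ha]
    intro a b hab hb
    have := (blockPos_strictMono hK).monotone hab
    rw [blockPos_add_two] at this
    rw [hdist (by omega) hb]
    omega
  have hinj : Set.InjOn f (Set.Iio m) :=
    (p.isPath_of_length_eq_dist hp).getVert_injOn.comp (blockPos_strictMono hK).injective.injOn
      fun j hj => hm j hj
  refine ⟨f '' Set.Iio m, isGenDPos_of_forall_far ?_, by simp [hinj.ncard_image]⟩
  rintro _ _ _ ⟨a, ha, rfl⟩ ⟨b, hb, rfl⟩ ⟨c, hc, rfl⟩ hab hac hbc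
  have := ne_of_apply_ne f hab
  have := ne_of_apply_ne f hac
  have := ne_of_apply_ne f hbc
  rcases (by omega : (a + 2 ≤ b ∨ b + 2 ≤ a) ∨ (b + 2 ≤ c ∨ c + 2 ≤ b) ∨ (a + 2 ≤ c ∨ c + 2 ≤ a))
    with h | h | h
  exacts [.inl (hfar ha hb h), .inr (.inl (hfar hb hc h)), .inr (.inr (hfar ha hc h))]

end SimpleGraph

theorem stmt_5_general {V : Type*} [Finite V] (G : SimpleGraph V) (hG : G.Connected)
    (k : ℕ) (hk : 2 ≤ k) :
    (if G.diam % (k + 1) = 0 then 2 * ((G.diam + 1 + k) / (k + 1)) - 1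
      else 2 * ((G.diam + 1 + k) / (k + 1))) ≤ gpNum G k := by
  have := hG.nonempty
  obtain ⟨u, v, huv⟩ := G.exists_dist_eq_diam
  obtain ⟨p, hp⟩ := hG.exists_walk_length_eq_dist u v
  obtain ⟨S, hS, hcard⟩ := p.exists_isGenDPos_ncard_eq_of_blockPos_le hp (d := k) (K := k + 1)
    (m := if G.diam % (k + 1) = 0 then 2 * (G.diam / (k + 1)) + 1 else 2 * (G.diam / (k + 1)) + 2)
    (by omega) (by omega) fun j hj => hp ▸ huv ▸ blockPos_le_of_lt (by omega) hj
  have hdiv : (G.diam + 1 + k) / (k + 1) = G.diam / (k + 1) + 1 := by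
    rw [show G.diam + 1 + k = G.diam + (k + 1) by ring]
    exact Nat.add_div_right _ (by omega)
  refine le_trans ?_ (hcard ▸ SimpleGraph.ncard_le_gpNum hS)
  rw [hdiv]
  split_ifs <;> omega

/-- Lower bound for gp_k in terms of the diameter D of a connected graph. -/
theorem stmt_5 {V : Type*} [Finite V] (G : SimpleGraph V) (hG : G.Connected)
    (k : ℕ) (hk : 2 ≤ k) (hkD : k ≤ G.diam) :
    (if G.diam % (k + 1) = 0 then 2 * ((G.diam + 1 + k) / (k + 1)) - 1
      else 2 * ((G.diam + 1 + k) / (k + 1))) ≤ gpNum G k :=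
  stmt_5_general G hG k hk
end

section
/- For n ≥ 5 and d ≥ ⌊n/2⌋, the general d-position number of the cycle C_n equals 3. -/
section

variable {V : Type*} {G : SimpleGraph V} {d : ℕ}

theorem IsGenDPos.anti {d' : ℕ} {S T : Set V} (h : IsGenDPos G d S) (hTS : T ⊆ S) (hd : d' ≤ d) :
    IsGenDPos G d' T :=
  fun _ _ _ hu hv hw huv huw hvw hsum hle =>
    h (hTS hu) (hTS hv) (hTS hw) huv huw hvw hsum (hle.trans hd)

theorem isGenDPos_triple_of_dist_lt {a b c : V} (hab : G.dist a b < G.dist a c + G.dist c b)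
    (hac : G.dist a c < G.dist a b + G.dist b c) (hbc : G.dist b c < G.dist b a + G.dist a c) :
    IsGenDPos G d {a, b, c} := by
  intro u v w hu hv hw huv huw hvw hsum _
  have := G.dist_comm (u := a) (v := b)
  have := G.dist_comm (u := a) (v := c)
  have := G.dist_comm (u := b) (v := c)
  simp only [Set.mem_insert_iff, Set.mem_singleton_iff] at hu hv hw
  rcases hu with rfl | rfl | rfl <;> rcases hv with rfl | rfl | rfl <;>
    rcases hw with rfl | rfl | rfl <;>
    first | exact huv rfl | exact huw rfl | exact hvw rfl | omega

end

namespace Fin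

variable {n : ℕ} [NeZero n]

def cycNorm (x : Fin n) : ℕ := min x.val (-x).val

theorem cycNorm_add_le (x y : Fin n) : cycNorm (x + y) ≤ cycNorm x + cycNorm y := by
  have := x.isLt
  have := y.isLt
  simp only [cycNorm, val_neg, Fin.ext_iff, val_zero, val_add_eq_ite]
  split_ifs <;> omega

theorem cycNorm_sub_of_le {a b : Fin n} (h : a ≤ b) :
    cycNorm (b - a) = min (b.val - a.val) (n - (b.val - a.val)) := by
  have := b.isLt
  rw [cycNorm, neg_sub, sub_val_of_le h]
  rcases h.lt_or_eq with h | rfl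
  · rw [coe_sub_iff_lt.2 h]; omega
  · simp

end Fin

namespace SimpleGraph

open Fin.CommRing

variable {n : ℕ} [NeZero n]

theorem cycleGraph_dist_add_one_le (x : Fin n) : (cycleGraph n).dist x (x + 1) ≤ 1 := by
  by_cases hn : n = 1
  · subst hn
    rw [Subsingleton.elim (x + 1) x, dist_self]
    exact zero_le_one
  · refine (dist_eq_one_iff_adj.2 (cycleGraph_adj'.2 (Or.inr ?_))).le
    rw [add_sub_cancel_left, Fin.val_one', Nat.one_mod_eq_one.2 hn]

theorem cycleGraph_dist_add_le (x : Fin n) (k : ℕ) :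
    (cycleGraph n).dist x (x + (k : Fin n)) ≤ k := by
  have hconn : (cycleGraph n).Connected := ⟨cycleGraph_preconnected⟩
  induction k with
  | zero => simp
  | succ k ih =>
    calc (cycleGraph n).dist x (x + ((k + 1 : ℕ) : Fin n))
        ≤ (cycleGraph n).dist x (x + (k : Fin n))
          + (cycleGraph n).dist (x + (k : Fin n)) (x + (k : Fin n) + 1) := by
          rw [Nat.cast_succ, ← add_assoc]; exact hconn.dist_triangle
      _ ≤ k + 1 := add_le_add ih (cycleGraph_dist_add_one_le _)

theorem Adj.cycNorm_sub_le {u v : Fin n} (h : (cycleGraph n).Adj u v) : (v - u).cycNorm ≤ 1 := by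
  rw [Fin.cycNorm, neg_sub]
  rcases cycleGraph_adj'.1 h with h | h <;> omega

theorem Walk.cycNorm_sub_le_length {u v : Fin n} (p : (cycleGraph n).Walk u v) :
    (v - u).cycNorm ≤ p.length := by
  induction p with
  | nil => simp [Fin.cycNorm]
  | @cons a b c hab q ih =>
    calc (c - a).cycNorm = ((c - b) + (b - a)).cycNorm := by rw [sub_add_sub_cancel]
      _ ≤ (c - b).cycNorm + (b - a).cycNorm := Fin.cycNorm_add_le _ _
      _ ≤ (Walk.cons hab q).length := by
        rw [Walk.length_cons]; exact add_le_add ih hab.cycNorm_sub_le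

theorem cycleGraph_dist (u v : Fin n) : (cycleGraph n).dist u v = (v - u).cycNorm := by
  have hconn : (cycleGraph n).Connected := ⟨cycleGraph_preconnected⟩
  refine le_antisymm (le_min ?_ ?_) ?_
  · simpa using cycleGraph_dist_add_le u (v - u).val
  · rw [neg_sub, dist_comm]
    simpa using cycleGraph_dist_add_le v (u - v).val
  · obtain ⟨p, hp⟩ := hconn.exists_walk_length_eq_dist u v
    exact hp ▸ p.cycNorm_sub_le_length

theorem cycleGraph_dist_of_le {a b : Fin n} (h : a ≤ b) :
    (cycleGraph n).dist a b = min (b.val - a.val) (n - (b.val - a.val)) := by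
  rw [cycleGraph_dist, Fin.cycNorm_sub_of_le h]

theorem not_isGenDPos_cycleGraph_of_lt {a b c e : Fin n} (hab : a < b) (hbc : b < c)
    (hce : c < e) : ¬IsGenDPos (cycleGraph n) (n / 2) {a, b, c, e} := by
  intro h
  have hac := hab.trans hbc
  have hae := hac.trans hce
  have hvals : a.val < b.val ∧ b.val < c.val ∧ c.val < e.val ∧ e.val < n :=
    ⟨hab, hbc, hce, e.isLt⟩
  by_cases hshort : c.val - a.val ≤ n / 2
  · refine h (by simp) (by simp) (by simp) hab.ne hac.ne hbc.ne ?_ ?_ <;>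
      simp only [cycleGraph_dist_of_le hab.le, cycleGraph_dist_of_le hbc.le,
        cycleGraph_dist_of_le hac.le] <;> omega
  · refine h (u := c) (v := e) (w := a) (by simp) (by simp) (by simp) hce.ne hac.ne' hae.ne'
      ?_ ?_ <;>
      simp only [dist_comm (u := e), dist_comm (u := c) (v := a), cycleGraph_dist_of_le hce.le,
        cycleGraph_dist_of_le hae.le, cycleGraph_dist_of_le hac.le] <;> omega

theorem exists_isGenDPos_cycleGraph_ncard_eq_three (hn : 5 ≤ n) (d : ℕ) :
    ∃ S : Set (Fin n), IsGenDPos (cycleGraph n) d S ∧ S.ncard = 3 := by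
  set k := (n + 1) / 3
  let a : Fin n := ⟨0, by omega⟩
  let b : Fin n := ⟨k, by omega⟩
  let c : Fin n := ⟨2 * k, by omega⟩
  have hab : a < b := Fin.mk_lt_mk.2 (by omega)
  have hbc : b < c := Fin.mk_lt_mk.2 (by omega)
  have hac := hab.trans hbc
  refine ⟨{a, b, c}, isGenDPos_triple_of_dist_lt ?_ ?_ ?_,
    Set.ncard_eq_three.2 ⟨a, b, c, hab.ne, hac.ne, hbc.ne, rfl⟩⟩ <;>
    simp only [dist_comm (u := b) (v := a), dist_comm (u := c) (v := b),
      cycleGraph_dist_of_le hab.le, cycleGraph_dist_of_le hbc.le, cycleGraph_dist_of_le hac.le,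
      a, b, c] <;> omega

end SimpleGraph

theorem IsGenDPos.ncard_le_three_of_cycleGraph {n d : ℕ} [NeZero n] {S : Set (Fin n)}
    (hS : IsGenDPos (SimpleGraph.cycleGraph n) d S) (hd : n / 2 ≤ d) : S.ncard ≤ 3 := by
  classical
  by_contra! h
  obtain ⟨t, hts, ht⟩ := Finset.exists_subset_card_eq (s := S.toFinset) (n := 4)
    (by rwa [← Set.ncard_eq_toFinset_card'])
  set f := t.orderEmbOfFin ht
  have hf : ∀ i, f i ∈ S := fun i => Set.mem_toFinset.1 (hts (t.orderEmbOfFin_mem ht i))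
  refine SimpleGraph.not_isGenDPos_cycleGraph_of_lt (f.strictMono (by decide : (0 : Fin 4) < 1))
    (f.strictMono (by decide : (1 : Fin 4) < 2)) (f.strictMono (by decide : (2 : Fin 4) < 3))
    (hS.anti ?_ hd)
  simp only [Set.insert_subset_iff, Set.singleton_subset_iff, hf, and_self]

/-- For d ≥ ⌊n/2⌋ the general d-position number of the cycle C_n equals 3. -/
theorem stmt_7 (n d : ℕ) (hn : 5 ≤ n) (hd : n / 2 ≤ d) :
    gpNum (SimpleGraph.cycleGraph n) d = 3 := by
  have : NeZero n := ⟨by omega⟩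
  refine IsGreatest.csSup_eq ⟨SimpleGraph.exists_isGenDPos_cycleGraph_ncard_eq_three hn d, ?_⟩
  rintro m ⟨S, hS, rfl⟩
  exact hS.ncard_le_three_of_cycleGraph hd
end

section
/- Let G be a connected graph and d ≥ 2. A set S ⊆ V(G) is a general d-position set if and only if: (i) the subgraph induced by S is a disjoint union of complete graphs Q_1,…,Q_ℓ; (ii) whenever Q_i and Q_j (i ≠ j) are not parallel, d_G(Q_i,Q_j) ≥ d; and (iii) whenever d_G(Q_i,Q_j) + d_G(Q_j,Q_k) = d_G(Q_i,Q_k) for distinct i,j,k, one has d_G(Q_i,Q_k) > d. -/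
/-- Distance between two sets of vertices. -/
noncomputable def setDist {V : Type*} (G : SimpleGraph V) (A B : Set V) : ℕ :=
  sInf {n | ∃ a ∈ A, ∃ b ∈ B, G.dist a b = n}

/-- Two vertex sets are parallel if all pairs realize the set distance. -/
def Parallel {V : Type*} (G : SimpleGraph V) (A B : Set V) : Prop :=
  ∀ a ∈ A, ∀ b ∈ B, G.dist a b = setDist G A B

open SimpleGraph

section

variable {V : Type*} {G : SimpleGraph V} {d : ℕ} {S A B C : Set V} {a a' b : V}

lemma setDist_le_dist (ha : a ∈ A) (hb : b ∈ B) : setDist G A B ≤ G.dist a b :=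
  Nat.sInf_le ⟨a, ha, b, hb, rfl⟩

lemma exists_dist_eq_setDist (hA : A.Nonempty) (hB : B.Nonempty) :
    ∃ a ∈ A, ∃ b ∈ B, G.dist a b = setDist G A B :=
  Nat.sInf_mem (s := {n | ∃ a ∈ A, ∃ b ∈ B, G.dist a b = n})
    ⟨_, hA.some, hA.some_mem, hB.some, hB.some_mem, rfl⟩

lemma setDist_pos (hG : G.Connected) (hA : A.Nonempty) (hB : B.Nonempty) (hAB : Disjoint A B) :
    0 < setDist G A B := by
  obtain ⟨a, ha, b, hb, hab⟩ := exists_dist_eq_setDist (G := G) hA hB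
  exact hab ▸ hG.pos_dist_of_ne (Set.disjoint_left.1 hAB ha <| · ▸ hb)

lemma dist_eq_setDist_of_dist_le (hAB : ¬ Parallel G A B → d ≤ setDist G A B)
    (ha : a ∈ A) (hb : b ∈ B) (h : G.dist a b ≤ d) : G.dist a b = setDist G A B := by
  by_cases hpar : Parallel G A B
  · exact hpar a ha b hb
  · exact le_antisymm (h.trans (hAB hpar)) (setDist_le_dist ha hb)

def adjOrEqSetoid (G : SimpleGraph V) (S : Set V)
    (htrans : ∀ ⦃u v w⦄, u ∈ S → v ∈ S → w ∈ S → G.Adj u v → G.Adj v w → u ≠ w → G.Adj u w) :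
    Setoid V where
  r u v := u = v ∨ (u ∈ S ∧ v ∈ S ∧ G.Adj u v)
  iseqv.refl _ := Or.inl rfl
  iseqv.symm := by
    rintro u v (rfl | ⟨hu, hv, huv⟩)
    exacts [Or.inl rfl, Or.inr ⟨hv, hu, huv.symm⟩]
  iseqv.trans := by
    rintro u v w (rfl | ⟨hu, hv, huv⟩) (rfl | ⟨hv, hw, hvw⟩)
    · exact Or.inl rfl
    · exact Or.inr ⟨hv, hw, hvw⟩
    · exact Or.inr ⟨hu, hv, huv⟩
    · by_cases huw : u = w
      exacts [Or.inl huw, Or.inr ⟨hu, hw, htrans hu hv hw huv hvw huw⟩]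

lemma Setoid.exists_fin_partition {α : Type*} (r : Setoid α) {S : Set α} (hS : S.Finite) :
    ∃ (ℓ : ℕ) (Q : Fin ℓ → Set α), (∀ i, (Q i).Nonempty) ∧ (⋃ i, Q i) = S ∧
      ∀ i j, ∀ a ∈ Q i, ∀ b ∈ Q j, (i = j ↔ r a b) := by
  have : Finite (Quotient.mk r '' S) := (hS.image _).to_subtype
  obtain ⟨ℓ, ⟨e⟩⟩ := Finite.exists_equiv_fin (Quotient.mk r '' S)
  refine ⟨ℓ, fun i => {a ∈ S | Quotient.mk r a = e.symm i}, fun i => ?_, ?_, ?_⟩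
  · obtain ⟨a, ha, hai⟩ := (e.symm i).2
    exact ⟨a, ha, hai⟩
  · ext a
    simp only [Set.mem_iUnion, Set.mem_ofPred_eq]
    refine ⟨fun ⟨_, ha, _⟩ => ha, fun ha => ⟨e ⟨_, a, ha, rfl⟩, ha, by simp⟩⟩
  · rintro i j a ⟨-, hai⟩ b ⟨-, hbj⟩
    rw [← Quotient.eq, hai, hbj, Subtype.coe_inj, e.symm.apply_eq_iff_eq]

namespace IsGenDPos

variable (hG : G.Connected) (hS : IsGenDPos G d S)
include hG hS

lemma adj_trans (hd : 2 ≤ d) {u v w : V} (hu : u ∈ S) (hv : v ∈ S) (hw : w ∈ S)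
    (huv : G.Adj u v) (hvw : G.Adj v w) (huw : u ≠ w) : G.Adj u w := by
  by_contra hnadj
  have h1 := dist_eq_one_iff_adj.2 huv
  have h2 := dist_eq_one_iff_adj.2 hvw
  have h3 : G.dist u w ≠ 1 := mt dist_eq_one_iff_adj.1 hnadj
  have := hG.dist_triangle (u := u) (v := v) (w := w)
  have := hG.pos_dist_of_ne huw
  exact hS hu hv hw huv.ne huw hvw.ne (by omega) (by omega)

lemma dist_eq_of_isClique (hAS : A ⊆ S) (hA : G.IsClique A) (ha : a ∈ A) (ha' : a' ∈ A)
    (hb : b ∈ S) (hbA : b ∉ A) (h : G.dist a b < d) : G.dist a' b = G.dist a b := by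
  have hab : a ≠ b := (hbA <| · ▸ ha)
  have ha'b : a' ≠ b := (hbA <| · ▸ ha')
  by_cases haa' : a = a'
  · rw [haa']
  have h1 := dist_eq_one_iff_adj.2 (hA ha ha' haa')
  have h2 := dist_eq_one_iff_adj.2 (hA ha' ha (Ne.symm haa'))
  have := hG.dist_triangle (u := a) (v := a') (w := b)
  have := hG.dist_triangle (u := a') (v := a) (w := b)
  by_contra hne
  rcases Nat.lt_or_gt_of_ne hne with hlt | hgt
  · exact hS (hAS ha) (hAS ha') hb haa' hab ha'b (by omega) (by omega)
  · exact hS (hAS ha') (hAS ha) hb (Ne.symm haa') ha'b hab (by omega) (by omega)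

lemma parallel_of_setDist_lt (hAS : A ⊆ S) (hBS : B ⊆ S) (hA : G.IsClique A) (hB : G.IsClique B)
    (hAne : A.Nonempty) (hBne : B.Nonempty) (hAB : Disjoint A B) (h : setDist G A B < d) :
    Parallel G A B := by
  obtain ⟨a, ha, b, hb, hab⟩ := exists_dist_eq_setDist (G := G) hAne hBne
  intro x hx y hy
  have hxb : G.dist x b = G.dist a b :=
    hS.dist_eq_of_isClique hG hAS hA ha hx (hBS hb) (Set.disjoint_right.1 hAB hb) (hab ▸ h)
  have hyx : G.dist y x = G.dist b x := by
    refine hS.dist_eq_of_isClique hG hBS hB hb hy (hAS hx) (Set.disjoint_left.1 hAB hx) ?_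
    rw [dist_comm, hxb, hab]
    exact h
  rw [dist_comm, hyx, dist_comm, hxb, hab]

lemma lt_setDist_of_setDist_add_setDist_eq (hAS : A ⊆ S) (hBS : B ⊆ S) (hCS : C ⊆ S)
    (hA : G.IsClique A) (hB : G.IsClique B) (hAne : A.Nonempty) (hBne : B.Nonempty)
    (hCne : C.Nonempty) (hAB : Disjoint A B) (hAC : Disjoint A C) (hBC : Disjoint B C)
    (hsum : setDist G A B + setDist G B C = setDist G A C) : d < setDist G A C := by
  by_contra! hle
  have hBCpos := setDist_pos hG hBne hCne hBC
  have hpar := hS.parallel_of_setDist_lt hG hAS hBS hA hB hAne hBne hAB (by omega)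
  obtain ⟨a, ha⟩ := hAne
  obtain ⟨b, hb, c, hc, hbc⟩ := exists_dist_eq_setDist (G := G) hBne hCne
  have hac := setDist_le_dist (G := G) ha hc
  have := hG.dist_triangle (u := a) (v := b) (w := c)
  have := hpar a ha b hb
  exact hS (hAS ha) (hBS hb) (hCS hc) (Set.disjoint_left.1 hAB ha <| · ▸ hb)
    (Set.disjoint_left.1 hAC ha <| · ▸ hc) (Set.disjoint_left.1 hBC hb <| · ▸ hc)
    (by omega) (by omega)

end IsGenDPos

/-- Conditions (i)–(iii), with (i) spelled out: the `Q i` are the vertex sets of the components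
of `G[S]`, each of them complete. -/
def IsGenDPosPartition (G : SimpleGraph V) (d : ℕ) (S : Set V) {ℓ : ℕ} (Q : Fin ℓ → Set V) :
    Prop :=
  (∀ i, (Q i).Nonempty) ∧
  (∀ i j, i ≠ j → Disjoint (Q i) (Q j)) ∧
  (⋃ i, Q i) = S ∧
  (∀ i, G.IsClique (Q i)) ∧
  (∀ i j, i ≠ j → ∀ a ∈ Q i, ∀ b ∈ Q j, ¬ G.Adj a b) ∧
  (∀ i j, i ≠ j → ¬ Parallel G (Q i) (Q j) → d ≤ setDist G (Q i) (Q j)) ∧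
  (∀ i j k, i ≠ j → i ≠ k → j ≠ k →
    setDist G (Q i) (Q j) + setDist G (Q j) (Q k) = setDist G (Q i) (Q k) →
    d < setDist G (Q i) (Q k))

theorem IsGenDPos.exists_isGenDPosPartition [Finite V] (hG : G.Connected) (hd : 2 ≤ d)
    (hS : IsGenDPos G d S) : ∃ (ℓ : ℕ) (Q : Fin ℓ → Set V), IsGenDPosPartition G d S Q := by
  obtain ⟨ℓ, Q, hne, hunion, hclass⟩ :=
    (adjOrEqSetoid G S fun _ _ _ => hS.adj_trans hG hd).exists_fin_partition S.toFinite
  have hQS (i) : Q i ⊆ S := hunion ▸ Set.subset_iUnion Q i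
  have hdisj (i j) (hij : i ≠ j) : Disjoint (Q i) (Q j) :=
    Set.disjoint_left.2 fun a hai haj => hij ((hclass i j a hai a haj).2 (Or.inl rfl))
  have hclique (i) : G.IsClique (Q i) := fun a ha b hb hab =>
    (((hclass i i a ha b hb).1 rfl).resolve_left hab).2.2
  have hcross (i j) (hij : i ≠ j) (a) (ha : a ∈ Q i) (b) (hb : b ∈ Q j) : ¬ G.Adj a b :=
    fun hab => hij ((hclass i j a ha b hb).2 (Or.inr ⟨hQS i ha, hQS j hb, hab⟩))
  refine ⟨ℓ, Q, hne, hdisj, hunion, hclique, hcross, fun i j hij hnpar => ?_,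
    fun i j k hij hik hjk => ?_⟩
  · exact not_lt.1 fun h => hnpar <| hS.parallel_of_setDist_lt hG (hQS i) (hQS j) (hclique i)
      (hclique j) (hne i) (hne j) (hdisj i j hij) h
  · exact hS.lt_setDist_of_setDist_add_setDist_eq hG (hQS i) (hQS j) (hQS k) (hclique i)
      (hclique j) (hne i) (hne j) (hne k) (hdisj i j hij) (hdisj i k hik) (hdisj j k hjk)

theorem IsGenDPosPartition.isGenDPos (hG : G.Connected) {ℓ : ℕ} {Q : Fin ℓ → Set V}
    (hQ : IsGenDPosPartition G d S Q) : IsGenDPos G d S := by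
  obtain ⟨-, hdisj, rfl, hclique, -, hpar, hadd⟩ := hQ
  have hdist_one (i) (a) (ha : a ∈ Q i) (b) (hb : b ∈ Q i) (hab : a ≠ b) : G.dist a b = 1 :=
    dist_eq_one_iff_adj.2 (hclique i ha hb hab)
  have hdist_eq (i j) (hij : i ≠ j) (a) (ha : a ∈ Q i) (b) (hb : b ∈ Q j) (h : G.dist a b ≤ d) :
      G.dist a b = setDist G (Q i) (Q j) :=
    dist_eq_setDist_of_dist_le (hpar i j hij) ha hb h
  have hvisit_twice (i j) (hij : i ≠ j) (a) (ha : a ∈ Q i) (b) (hb : b ∈ Q j) (b') (hb' : b' ∈ Q j)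
      (hlt : G.dist a b < G.dist a b') (hle : G.dist a b' ≤ d) : False := by
    have := hdist_eq i j hij a ha b hb (by omega)
    have := hdist_eq i j hij a ha b' hb' hle
    omega
  intro u v w hu hv hw huv huw hvw hgeo hle
  obtain ⟨i, hu⟩ := Set.mem_iUnion.1 hu
  obtain ⟨j, hv⟩ := Set.mem_iUnion.1 hv
  obtain ⟨k, hw⟩ := Set.mem_iUnion.1 hw
  have := hG.pos_dist_of_ne huv
  have := hG.pos_dist_of_ne hvw
  by_cases hik : i = k
  · subst hik
    have := hdist_one i u hu w hw huw
    omega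
  by_cases hij : i = j
  · subst hij
    have := hdist_one i u hu v hv huv
    exact hvisit_twice k i (Ne.symm hik) w hw v hv u hu
      (by rw [dist_comm (u := w), dist_comm (u := w)]; omega) (by rw [dist_comm]; omega)
  by_cases hjk : j = k
  · subst hjk
    have := hdist_one j v hv w hw hvw
    exact hvisit_twice i j hij u hu v hv w hw (by omega) hle
  have := hadd i j k hij hik hjk (by
    rw [← hdist_eq i j hij u hu v hv (by omega), ← hdist_eq j k hjk v hv w hw (by omega),
      ← hdist_eq i k hik u hu w hw hle, hgeo])
  have := hdist_eq i k hik u hu w hw hle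
  omega

end

/-- Characterization of general d-position sets: S is a general d-position set iff
the subgraph induced by S is a disjoint union of cliques Q_1,…,Q_ℓ (its components)
satisfying conditions (ii) and (iii). -/
theorem stmt_8 {V : Type*} [Finite V] (G : SimpleGraph V) (hG : G.Connected) (d : ℕ) (hd : 2 ≤ d)
    (S : Set V) :
    IsGenDPos G d S ↔
      ∃ (ℓ : ℕ) (Q : Fin ℓ → Set V),
        (∀ i, (Q i).Nonempty) ∧
        (∀ i j, i ≠ j → Disjoint (Q i) (Q j)) ∧
        (⋃ i, Q i) = S ∧
        (∀ i, G.IsClique (Q i)) ∧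
        (∀ i j, i ≠ j → ∀ a ∈ Q i, ∀ b ∈ Q j, ¬ G.Adj a b) ∧
        (∀ i j, i ≠ j → ¬ Parallel G (Q i) (Q j) → d ≤ setDist G (Q i) (Q j)) ∧
        (∀ i j k, i ≠ j → i ≠ k → j ≠ k →
          setDist G (Q i) (Q j) + setDist G (Q j) (Q k) = setDist G (Q i) (Q k) →
          d < setDist G (Q i) (Q k)) :=
  ⟨IsGenDPos.exists_isGenDPosPartition hG hd, fun ⟨_, _, hQ⟩ => IsGenDPosPartition.isGenDPos hG hQ⟩
end

section
/- Let G be a connected graph. A set S ⊆ V(G) is a general position set if and only if: (i) the subgraph induced by S is a disjoint union of complete graphs Q_1,…,Q_ℓ; (ii) Q_i and Q_j are parallel for all i ≠ j; and (iii) d_G(Q_i,Q_j) + d_G(Q_j,Q_k) ≠ d_G(Q_i,Q_k) for all distinct i,j,k. -/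
/-- A general position set: no three distinct vertices lie on a common geodesic. -/
def IsGenPos {V : Type*} (G : SimpleGraph V) (S : Set V) : Prop :=
  ∀ ⦃u v w : V⦄, u ∈ S → v ∈ S → w ∈ S → u ≠ v → u ≠ w → v ≠ w →
    G.dist u v + G.dist v w = G.dist u w → False

/-! In a general position set `S`, "equal or adjacent" is transitive (two non-adjacent
neighbours of a vertex are at distance 2 through it), so its classes are cliques. If `a`, `a'`
are adjacent and `b` lies in another class, then `d(a, b) = d(a', b)`, since otherwise one of
`a`, `a'` lies on a geodesic from the other to `b`; hence distinct classes are parallel, and for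
three classes the general position condition on representatives is exactly (iii). Conversely,
under (i)–(iii) the distance of two vertices of `S` is `1` or the distance of their classes, and
a geodesic triple would give `1 + 1 = 1`, `1 + d = d`, `2 d = 1`, or equality in (iii). -/

open SimpleGraph

section

variable {V : Type*} {G : SimpleGraph V} {S : Set V}

theorem setDist_comm (G : SimpleGraph V) (A B : Set V) : setDist G A B = setDist G B A := by
  unfold setDist
  congr 1
  ext n
  constructor <;> rintro ⟨a, ha, b, hb, rfl⟩ <;> exact ⟨b, hb, a, ha, G.dist_comm⟩

theorem parallel_of_forall_dist_eq {A B : Set V}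
    (h : ∀ a ∈ A, ∀ b ∈ B, ∀ a' ∈ A, ∀ b' ∈ B, G.dist a b = G.dist a' b') : Parallel G A B := by
  intro a ha b hb
  obtain ⟨a', ha', b', hb', hd⟩ :=
    Nat.sInf_mem (s := {n | ∃ a ∈ A, ∃ b ∈ B, G.dist a b = n}) ⟨_, a, ha, b, hb, rfl⟩
  rw [setDist, ← hd]
  exact h a ha b hb a' ha' b' hb'

/-- Conditions (i)–(iii) of the characterization on a family of cliques `Q i` covering `S`. -/
structure IsParallelCliqueCover (G : SimpleGraph V) (S : Set V) {ι : Type*} (Q : ι → Set V) :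
    Prop where
  nonempty : ∀ i, (Q i).Nonempty
  disjoint : ∀ i j, i ≠ j → Disjoint (Q i) (Q j)
  iUnion_eq : ⋃ i, Q i = S
  isClique : ∀ i, G.IsClique (Q i)
  not_adj : ∀ i j, i ≠ j → ∀ a ∈ Q i, ∀ b ∈ Q j, ¬ G.Adj a b
  parallel : ∀ i j, i ≠ j → Parallel G (Q i) (Q j)
  setDist_add_ne : ∀ i j k, i ≠ j → i ≠ k → j ≠ k →
    setDist G (Q i) (Q j) + setDist G (Q j) (Q k) ≠ setDist G (Q i) (Q k)

namespace IsParallelCliqueCover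

variable {ι : Type*} {Q : ι → Set V}

theorem dist_eq [DecidableEq ι] (hQ : IsParallelCliqueCover G S Q) {i j : ι} {u v : V}
    (hu : u ∈ Q i) (hv : v ∈ Q j) (huv : u ≠ v) :
    G.dist u v = if i = j then 1 else setDist G (Q i) (Q j) := by
  split_ifs with hij
  · subst hij
    exact dist_eq_one_iff_adj.2 (hQ.isClique i hu hv huv)
  · exact hQ.parallel i j hij u hu v hv

theorem isGenPos (hQ : IsParallelCliqueCover G S Q) : IsGenPos G S := by
  intro u v w hu hv hw huv huw hvw heq
  simp only [← hQ.iUnion_eq, Set.mem_iUnion] at hu hv hw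
  obtain ⟨i, hu⟩ := hu
  obtain ⟨j, hv⟩ := hv
  obtain ⟨k, hw⟩ := hw
  classical
  rw [hQ.dist_eq hu hv huv, hQ.dist_eq hv hw hvw, hQ.dist_eq hu hw huw] at heq
  split_ifs at heq <;> subst_vars <;> first
    | omega
    | contradiction
    | exact hQ.setDist_add_ne i j k ‹_› ‹_› ‹_› heq
    | rw [setDist_comm G (Q _)] at heq; omega

end IsParallelCliqueCover

namespace IsGenPos

theorem adj_of_adj_of_adj (hS : IsGenPos G S) (hG : G.Connected) {a b c : V} (ha : a ∈ S)
    (hb : b ∈ S) (hc : c ∈ S) (hab : G.Adj a b) (hbc : G.Adj b c) (hac : a ≠ c) : G.Adj a c := by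
  by_contra hnadj
  have hle : G.dist a c ≤ G.dist a b + G.dist b c := hG.dist_triangle
  have hpos : 0 < G.dist a c := hG.pos_dist_of_ne hac
  have hne : G.dist a c ≠ 1 := fun h => hnadj (dist_eq_one_iff_adj.1 h)
  have hab1 : G.dist a b = 1 := dist_eq_one_iff_adj.2 hab
  have hbc1 : G.dist b c = 1 := dist_eq_one_iff_adj.2 hbc
  exact hS ha hb hc hab.ne hac hbc.ne (by omega)

theorem dist_le_dist_of_adj (hS : IsGenPos G S) (hG : G.Connected) {a a' b : V} (ha : a ∈ S)
    (ha' : a' ∈ S) (hb : b ∈ S) (hadj : G.Adj a a') (hab : a ≠ b) (ha'b : a' ≠ b) :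
    G.dist a b ≤ G.dist a' b := by
  by_contra! hlt
  have hle : G.dist a b ≤ G.dist a a' + G.dist a' b := hG.dist_triangle
  have haa' : G.dist a a' = 1 := dist_eq_one_iff_adj.2 hadj
  exact hS ha ha' hb hadj.ne hab ha'b (by omega)

theorem dist_eq_dist_of_eq_or_adj (hS : IsGenPos G S) (hG : G.Connected) {a a' b : V}
    (ha : a ∈ S) (ha' : a' ∈ S) (hb : b ∈ S) (hrel : a = a' ∨ G.Adj a a') (hab : a ≠ b)
    (ha'b : a' ≠ b) : G.dist a b = G.dist a' b := by
  rcases hrel with rfl | hadj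
  · rfl
  · exact le_antisymm (hS.dist_le_dist_of_adj hG ha ha' hb hadj hab ha'b)
      (hS.dist_le_dist_of_adj hG ha' ha hb hadj.symm ha'b hab)

theorem parallel_of_isClique (hS : IsGenPos G S) (hG : G.Connected) {A B : Set V}
    (hAS : A ⊆ S) (hBS : B ⊆ S) (hA : G.IsClique A) (hB : G.IsClique B) (hAB : Disjoint A B) :
    Parallel G A B := by
  refine parallel_of_forall_dist_eq fun a ha b hb a' ha' b' hb' => ?_
  have hne : ∀ x ∈ A, ∀ y ∈ B, x ≠ y := fun x hx y hy => hAB.ne_of_mem hx hy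
  calc G.dist a b = G.dist a' b :=
        hS.dist_eq_dist_of_eq_or_adj hG (hAS ha) (hAS ha') (hBS hb)
          ((eq_or_ne a a').imp_right (hA ha ha')) (hne a ha b hb) (hne a' ha' b hb)
    _ = G.dist b a' := G.dist_comm
    _ = G.dist b' a' :=
        hS.dist_eq_dist_of_eq_or_adj hG (hBS hb) (hBS hb') (hAS ha')
          ((eq_or_ne b b').imp_right (hB hb hb')) (hne a' ha' b hb).symm (hne a' ha' b' hb').symm
    _ = G.dist a' b' := G.dist_comm

theorem setDist_add_ne (hS : IsGenPos G S) {A B C : Set V} (hAS : A ⊆ S) (hBS : B ⊆ S)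
    (hCS : C ⊆ S) (hA : A.Nonempty) (hB : B.Nonempty) (hC : C.Nonempty) (hAB : Disjoint A B)
    (hAC : Disjoint A C) (hBC : Disjoint B C) (hpAB : Parallel G A B) (hpBC : Parallel G B C)
    (hpAC : Parallel G A C) : setDist G A B + setDist G B C ≠ setDist G A C := by
  obtain ⟨⟨a, ha⟩, ⟨b, hb⟩, ⟨c, hc⟩⟩ := And.intro hA (And.intro hB hC)
  rw [← hpAB a ha b hb, ← hpBC b hb c hc, ← hpAC a ha c hc]
  exact hS (hAS ha) (hBS hb) (hCS hc) (hAB.ne_of_mem ha hb) (hAC.ne_of_mem ha hc)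
    (hBC.ne_of_mem hb hc)

def eqOrAdjSetoid (hS : IsGenPos G S) (hG : G.Connected) : Setoid S where
  r a b := (a : V) = b ∨ G.Adj a b
  iseqv := by
    refine ⟨fun _ => Or.inl rfl, fun h => h.imp Eq.symm Adj.symm, ?_⟩
    rintro a b c (hab | hab) (hbc | hbc)
    · exact Or.inl (hab.trans hbc)
    · exact hab ▸ Or.inr hbc
    · exact hbc ▸ Or.inr hab
    · exact or_iff_not_imp_left.2 (hS.adj_of_adj_of_adj hG a.2 b.2 c.2 hab hbc)

theorem isParallelCliqueCover_fibers (hS : IsGenPos G S) (hG : G.Connected) {ι : Type*}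
    (f : S → ι) (hf : Function.Surjective f)
    (hff : ∀ x y : S, f x = f y ↔ (x : V) = y ∨ G.Adj x y) :
    IsParallelCliqueCover G S fun i => {v | ∃ h : v ∈ S, f ⟨v, h⟩ = i} := by
  set Q : ι → Set V := fun i => {v | ∃ h : v ∈ S, f ⟨v, h⟩ = i}
  have hQS : ∀ i, Q i ⊆ S := fun i v hv => hv.1
  have nonempty : ∀ i, (Q i).Nonempty := fun i => by
    obtain ⟨x, rfl⟩ := hf i
    exact ⟨x, x.2, rfl⟩
  have cross : ∀ i j, i ≠ j → ∀ a ∈ Q i, ∀ b ∈ Q j, ¬ (a = b ∨ G.Adj a b) := by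
    rintro i j hij a ⟨ha, rfl⟩ b ⟨hb, rfl⟩ hab
    exact hij ((hff ⟨a, ha⟩ ⟨b, hb⟩).2 hab)
  have disjoint : ∀ i j, i ≠ j → Disjoint (Q i) (Q j) := fun i j hij =>
    Set.disjoint_left.2 fun v hi hj => cross i j hij v hi v hj (Or.inl rfl)
  have isClique : ∀ i, G.IsClique (Q i) := by
    rintro i a ⟨ha, rfl⟩ b ⟨hb, hab⟩ hne
    exact ((hff ⟨a, ha⟩ ⟨b, hb⟩).1 hab.symm).resolve_left hne
  have parallel : ∀ i j, i ≠ j → Parallel G (Q i) (Q j) := fun i j hij =>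
    hS.parallel_of_isClique hG (hQS i) (hQS j) (isClique i) (isClique j) (disjoint i j hij)
  refine ⟨nonempty, disjoint, ?_, isClique, fun i j hij a ha b hb hadj =>
    cross i j hij a ha b hb (Or.inr hadj), parallel, fun i j k hij hik hjk =>
    hS.setDist_add_ne (hQS i) (hQS j) (hQS k) (nonempty i) (nonempty j) (nonempty k)
      (disjoint i j hij) (disjoint i k hik) (disjoint j k hjk) (parallel i j hij)
      (parallel j k hjk) (parallel i k hik)⟩
  ext v
  simp only [Set.mem_iUnion]
  exact ⟨fun ⟨i, hv⟩ => hQS i hv, fun hv => ⟨f ⟨v, hv⟩, hv, rfl⟩⟩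

theorem exists_isParallelCliqueCover [Finite V] (hS : IsGenPos G S) (hG : G.Connected) :
    ∃ (ℓ : ℕ) (Q : Fin ℓ → Set V), IsParallelCliqueCover G S Q := by
  let r := hS.eqOrAdjSetoid hG
  let e := Finite.equivFin (Quotient r)
  refine ⟨_, _, hS.isParallelCliqueCover_fibers hG (e ∘ Quotient.mk r)
    (e.surjective.comp Quotient.mk_surjective) fun x y => ?_⟩
  exact e.injective.eq_iff.trans Quotient.eq

end IsGenPos

end

/-- Characterization of general position sets (Anand et al.): S is a general
position set iff the induced subgraph is a disjoint union of cliques which are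
pairwise parallel and whose set distances satisfy no triangle equality. -/
theorem stmt_9 {V : Type*} [Finite V] (G : SimpleGraph V) (hG : G.Connected) (S : Set V) :
    IsGenPos G S ↔
      ∃ (ℓ : ℕ) (Q : Fin ℓ → Set V),
        (∀ i, (Q i).Nonempty) ∧
        (∀ i j, i ≠ j → Disjoint (Q i) (Q j)) ∧
        (⋃ i, Q i) = S ∧
        (∀ i, G.IsClique (Q i)) ∧
        (∀ i j, i ≠ j → ∀ a ∈ Q i, ∀ b ∈ Q j, ¬ G.Adj a b) ∧
        (∀ i j, i ≠ j → Parallel G (Q i) (Q j)) ∧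
        (∀ i j k, i ≠ j → i ≠ k → j ≠ k →
          setDist G (Q i) (Q j) + setDist G (Q j) (Q k) ≠ setDist G (Q i) (Q k)) := by
  constructor
  · intro hS
    obtain ⟨ℓ, Q, hQ⟩ := hS.exists_isParallelCliqueCover hG
    exact ⟨ℓ, Q, hQ.nonempty, hQ.disjoint, hQ.iUnion_eq, hQ.isClique, hQ.not_adj, hQ.parallel,
      hQ.setDist_add_ne⟩
  · rintro ⟨ℓ, Q, hne, hdisj, hunion, hclique, hnadj, hpar, htri⟩
    exact IsParallelCliqueCover.isGenPos ⟨hne, hdisj, hunion, hclique, hnadj, hpar, htri⟩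
end

section
/- If G is a triangle-free connected graph, d ≥ 2, and S ⊆ V(G) is a general d-position set, then S is a dissociation set of G. -/
/-- S is a dissociation set: the subgraph induced by S has maximum degree at most 1. -/
def IsDissociation {V : Type*} (G : SimpleGraph V) (S : Set V) : Prop :=
  ∀ v ∈ S, {u | u ∈ S ∧ G.Adj v u}.Subsingleton

namespace SimpleGraph

variable {V : Type*} {G : SimpleGraph V} {u v w : V}

theorem CliqueFree.dist_eq_two_of_adj_of_adj (htf : G.CliqueFree 3) (hvu : G.Adj v u)
    (hvw : G.Adj v w) (huw : u ≠ w) : G.dist u w = 2 := by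
  have hnadj : ¬G.Adj u w := isIndepSet_neighborSet_of_triangleFree G htf v hvu hvw huw
  have hcommon : v ∈ G.commonNeighbors u w := G.mem_commonNeighbors.mpr ⟨hvu.symm, hvw.symm⟩
  rw [dist, edist_eq_two_iff.mpr ⟨huw, hnadj, ⟨v, hcommon⟩⟩]
  rfl

end SimpleGraph

theorem stmt_12_general {V : Type*} (G : SimpleGraph V)
    (htf : G.CliqueFree 3) (d : ℕ) (hd : 2 ≤ d) (S : Set V) (hS : IsGenDPos G d S) :
    IsDissociation G S := by
  intro v hv u ⟨huS, hvu⟩ w ⟨hwS, hvw⟩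
  by_contra huw
  have hdist : G.dist u w = 2 := htf.dist_eq_two_of_adj_of_adj hvu hvw huw
  refine hS huS hv hwS hvu.ne' huw hvw.ne ?_ (hdist ▸ hd)
  rw [SimpleGraph.dist_comm, SimpleGraph.dist_eq_one_iff_adj.mpr hvu,
    SimpleGraph.dist_eq_one_iff_adj.mpr hvw, hdist]

/-- In a triangle-free connected graph, every general d-position set (d ≥ 2) is a
dissociation set. -/
theorem stmt_12 {V : Type*} (G : SimpleGraph V) (hG : G.Connected)
    (htf : G.CliqueFree 3) (d : ℕ) (hd : 2 ≤ d) (S : Set V) (hS : IsGenDPos G d S) :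
    IsDissociation G S :=
  stmt_12_general G htf d hd S hS
end

section
/- If 2 ≤ m ≤ n, then the general 2-position number of the complete bipartite graph K_{m,n} equals n, which equals its independence number. -/
/-- The independence number of G. -/
noncomputable def indepNum {V : Type*} (G : SimpleGraph V) : ℕ :=
  sSup {n | ∃ S : Set V, (∀ u ∈ S, ∀ v ∈ S, ¬ G.Adj u v) ∧ S.ncard = n}

/-! In `K_{α,β}` two distinct vertices are at distance `1` if they lie on different sides and at
distance `2` if they lie on the same side. Hence a general `2`-position set containing a vertex of
each side cannot contain a third vertex `w`: the other chosen vertex on the side of `w` lies on a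
geodesic of length `2` between them. So such a set either has at most two elements or lies in one
side, which bounds it by `max 2 (max |α| |β|)`; one side is a general `2`-position set, because
`2 + 2 ≠ 2`. Independent sets also lie in one side, and each side is independent. -/

open Sum Set

lemma SimpleGraph.dist_eq_two_of_adj_of_adj_s18 {V : Type*} {G : SimpleGraph V} {u v w : V}
    (hne : u ≠ v) (hnadj : ¬ G.Adj u v) (huw : G.Adj u w) (hwv : G.Adj w v) : G.dist u v = 2 := by
  rw [SimpleGraph.dist, SimpleGraph.edist_eq_two_iff.mpr ⟨hne, hnadj, w, huw, hwv.symm⟩]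
  rfl

lemma Sum.subset_range_inl_or_subset_range_inr {α β : Type*} {S : Set (α ⊕ β)}
    (h : ¬ ∃ a b, inl a ∈ S ∧ inr b ∈ S) : S ⊆ range inl ∨ S ⊆ range inr := by
  by_contra! hboth
  obtain ⟨⟨x, hx, hxl⟩, ⟨y, hy, hyr⟩⟩ := And.imp not_subset.mp not_subset.mp hboth
  rcases x with a | b
  · exact hxl (mem_range_self a)
  rcases y with a | b'
  · exact h ⟨a, b, hy, hx⟩
  · exact hyr (mem_range_self b')

lemma Set.ncard_le_max_of_subset_range_inl_or_subset_range_inr {α β : Type*} [Finite α] [Finite β]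
    {S : Set (α ⊕ β)} (h : S ⊆ range inl ∨ S ⊆ range inr) :
    S.ncard ≤ max (Nat.card α) (Nat.card β) := by
  rcases h with h | h
  · exact ((ncard_le_ncard h).trans (ncard_range_of_injective inl_injective).le).trans
      (le_max_left _ _)
  · exact ((ncard_le_ncard h).trans (ncard_range_of_injective inr_injective).le).trans
      (le_max_right _ _)

section CompleteBipartite

open SimpleGraph

variable {α β : Type*}

local notation "K" => completeBipartiteGraph α β

lemma completeBipartiteGraph_dist_inl_inr (a : α) (b : β) : (K).dist (inl a) (inr b) = 1 :=
  dist_eq_one_iff_adj.mpr (by simp)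

lemma completeBipartiteGraph_dist_inr_inl (b : β) (a : α) : (K).dist (inr b) (inl a) = 1 :=
  dist_eq_one_iff_adj.mpr (by simp)

lemma completeBipartiteGraph_dist_inl_inl (b : β) {a a' : α} (h : a ≠ a') :
    (K).dist (inl a) (inl a') = 2 :=
  dist_eq_two_of_adj_of_adj_s18 (w := inr b) (by simpa) (by simp) (by simp) (by simp)

lemma completeBipartiteGraph_dist_inr_inr (a : α) {b b' : β} (h : b ≠ b') :
    (K).dist (inr b) (inr b') = 2 :=
  dist_eq_two_of_adj_of_adj_s18 (w := inl a) (by simpa) (by simp) (by simp) (by simp)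

lemma IsGenDPos.completeBipartiteGraph_subset_pair {S : Set (α ⊕ β)} (hS : IsGenDPos K 2 S)
    {a : α} {b : β} (ha : inl a ∈ S) (hb : inr b ∈ S) : S ⊆ {inl a, inr b} := by
  rintro (a' | b') hw
  · by_contra hne
    have haa' : a ≠ a' := fun h => hne (by simp [h])
    have hd := completeBipartiteGraph_dist_inl_inl b haa'
    exact hS ha hb hw (by simp) (by simpa) (by simp)
      (by rw [completeBipartiteGraph_dist_inl_inr, completeBipartiteGraph_dist_inr_inl, hd]) hd.le
  · by_contra hne
    have hbb' : b ≠ b' := fun h => hne (by simp [h])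
    have hd := completeBipartiteGraph_dist_inr_inr a hbb'
    exact hS hb ha hw (by simp) (by simpa) (by simp)
      (by rw [completeBipartiteGraph_dist_inr_inl, completeBipartiteGraph_dist_inl_inr, hd]) hd.le

theorem IsGenDPos.completeBipartiteGraph_ncard_le [Finite α] [Finite β] {S : Set (α ⊕ β)}
    (hS : IsGenDPos K 2 S) : S.ncard ≤ max 2 (max (Nat.card α) (Nat.card β)) := by
  by_cases hboth : ∃ a b, inl a ∈ S ∧ inr b ∈ S
  · obtain ⟨a, b, ha, hb⟩ := hboth
    calc S.ncard ≤ ({inl a, inr b} : Set (α ⊕ β)).ncard :=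
          ncard_le_ncard (hS.completeBipartiteGraph_subset_pair ha hb)
      _ = 2 := ncard_pair inl_ne_inr
      _ ≤ _ := le_max_left _ _
  · exact (ncard_le_max_of_subset_range_inl_or_subset_range_inr
      (subset_range_inl_or_subset_range_inr hboth)).trans (le_max_right _ _)

lemma isGenDPos_completeBipartiteGraph_range_inr [Nonempty α] : IsGenDPos K 2 (range inr) := by
  rintro _ _ _ ⟨b₁, rfl⟩ ⟨b₂, rfl⟩ ⟨b₃, rfl⟩ h₁₂ h₁₃ h₂₃ hgeo -
  obtain ⟨a⟩ := ‹Nonempty α›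
  rw [completeBipartiteGraph_dist_inr_inr a (ne_of_apply_ne inr h₁₂),
    completeBipartiteGraph_dist_inr_inr a (ne_of_apply_ne inr h₂₃),
    completeBipartiteGraph_dist_inr_inr a (ne_of_apply_ne inr h₁₃)] at hgeo
  omega

lemma completeBipartiteGraph_ncard_le_of_forall_not_adj [Finite α] [Finite β] {S : Set (α ⊕ β)}
    (hS : ∀ u ∈ S, ∀ v ∈ S, ¬ (K).Adj u v) : S.ncard ≤ max (Nat.card α) (Nat.card β) :=
  ncard_le_max_of_subset_range_inl_or_subset_range_inr <|
    subset_range_inl_or_subset_range_inr fun ⟨_, _, ha, hb⟩ => hS _ ha _ hb (by simp)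

lemma completeBipartiteGraph_not_adj_of_mem_range_inr :
    ∀ u ∈ range (inr : β → α ⊕ β), ∀ v ∈ range inr, ¬ (K).Adj u v := by
  rintro _ ⟨b, rfl⟩ _ ⟨b', rfl⟩
  simp

end CompleteBipartite

/-- For 2 ≤ m ≤ n, gp_2(K_{m,n}) = n = α(K_{m,n}). -/
theorem stmt_18 (m n : ℕ) (hm : 2 ≤ m) (hmn : m ≤ n) :
    gpNum (completeBipartiteGraph (Fin m) (Fin n)) 2 = n ∧
      indepNum (completeBipartiteGraph (Fin m) (Fin n)) = n := by
  have : Nonempty (Fin m) := ⟨⟨0, by omega⟩⟩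
  have hcard : (range (inr : Fin n → Fin m ⊕ Fin n)).ncard = n := by
    simp [ncard_range_of_injective inr_injective]
  refine ⟨IsGreatest.csSup_eq ⟨⟨_, isGenDPos_completeBipartiteGraph_range_inr, hcard⟩, ?_⟩,
    IsGreatest.csSup_eq ⟨⟨_, completeBipartiteGraph_not_adj_of_mem_range_inr, hcard⟩, ?_⟩⟩
  · rintro k ⟨S, hS, rfl⟩
    simpa [show max 2 (max m n) = n by omega] using hS.completeBipartiteGraph_ncard_le
  · rintro k ⟨S, hS, rfl⟩
    simpa [hmn] using completeBipartiteGraph_ncard_le_of_forall_not_adj hS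
end
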